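/- Assume that (H, G₁) satisfies Condition A with constant ζ and Condition B with constant ζ for some integer ζ ≥ 1. Then G = P ∪ P⁻¹ ∪ G₁: every element of G is (H, G₁)-positive, or (H, G₁)-negative, or belongs to G₁. -/

import Mathlib

namespace GarsideOrder

variable {G : Type*} [Group G]

/-- `a ≤_R b` iff `b * a⁻¹ ∈ M`. -/
def leR (M : Submonoid G) (a b : G) : Prop := b * a⁻¹ ∈ M

/-- `a ≤_L b` iff `a⁻¹ * b ∈ M`. -/
def leL (M : Submonoid G) (a b : G) : Prop := a⁻¹ * b ∈ M

/-- Right divisors (in `M`) of `a`. -/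
def DivR (M : Submonoid G) (a : G) : Set G := {b : G | b ∈ M ∧ leR M b a}

/-- Left divisors (in `M`) of `a`. -/
def DivL (M : Submonoid G) (a : G) : Set G := {b : G | b ∈ M ∧ leL M b a}

/-- `a` is balanced if its sets of right and left divisors coincide. -/
def Balanced (M : Submonoid G) (a : G) : Prop := DivR M a = DivL M a

open Classical in
/-- The `N`-tail of `a`: the unique `b ∈ N` having the same right divisors lying in `N`
as `a` (w.r.t. the divisibility of the ambient monoid `M`). -/
noncomputable def tail (M N : Submonoid G) (a : G) : G :=
  if h : ∃ b : G, b ∈ N ∧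
      {c : G | c ∈ N ∧ leR M c a} = {c : G | c ∈ N ∧ leR M c b} then
    h.choose
  else 1

/-- Iterated stripping of alternating tails: first the `M₁`-tail, then the `N`-tail, etc. -/
noncomputable def strip (M M₁ N : Submonoid G) : ℕ → G → G
  | 0, a => a
  | i + 1, a =>
      strip M M₁ N i a *
        (tail M (if i % 2 = 0 then M₁ else N) (strip M M₁ N i a))⁻¹

/-- The breadth of `a`: the length of the alternating form of `a`, i.e. the least `p ≥ 1`
such that stripping alternating tails `p` times reaches `1`. -/
noncomputable def bh (M M₁ N : Submonoid G) (a : G) : ℕ :=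
  sInf {p : ℕ | 1 ≤ p ∧ strip M M₁ N p a = 1}

/-- The depth of `a`: `(bh a - 1)/2` if `bh a` is odd, `bh a / 2` if `bh a` is even;
in both cases this is `bh a / 2` with natural division. -/
noncomputable def dpt (M M₁ N : Submonoid G) (a : G) : ℕ := bh M M₁ N a / 2

/-- `a ∈ M` is unmovable if `Δ` does not right-divide it. -/
def Unmovable (M : Submonoid G) (Δ a : G) : Prop := a ∈ M ∧ ¬ leR M Δ a

/-- `α` is `(H, G₁)`-negative: its `Δ`-form is `a Δ^{-k}` with `k ≥ 1` and
`dpt a < dpt (Δ^k)`. -/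
def Negative (M M₁ N : Submonoid G) (Δ : G) (α : G) : Prop :=
  ∃ a : G, ∃ k : ℕ, Unmovable M Δ a ∧ 1 ≤ k ∧ α = a * (Δ ^ k)⁻¹ ∧
    dpt M M₁ N a < dpt M M₁ N (Δ ^ k)

/-- `α` is `(H, G₁)`-positive if `α⁻¹` is `(H, G₁)`-negative. -/
def Positive (M M₁ N : Submonoid G) (Δ : G) (α : G) : Prop :=
  Negative M M₁ N Δ α⁻¹

/-- The set `Θ` of theta elements `θ^k a₀`, `k ≥ 1`, `a₀ ∈ M₁`. -/
def thetaSet (M₁ : Submonoid G) (θ : G) : Set G :=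
  {x : G | ∃ k : ℕ, 1 ≤ k ∧ ∃ a₀ ∈ M₁, x = θ ^ k * a₀}

/-- `Θ̄ = Θ ∪ M₁`. -/
def thetaBar (M₁ : Submonoid G) (θ : G) : Set G := thetaSet M₁ θ ∪ (M₁ : Set G)

/-- Condition A with constant `ζ`: `dpt (Δ^k) = ζ k + 1` for all `k ≥ 1`. -/
def CondA (M M₁ N : Submonoid G) (Δ : G) (ζ : ℕ) : Prop :=
  ∀ k : ℕ, 1 ≤ k → dpt M M₁ N (Δ ^ k) = ζ * k + 1

/-- Condition B with constant `ζ`. -/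
def CondB (M M₁ N : Submonoid G) (Δ θ : G) (ζ : ℕ) : Prop :=
  ∀ a b c : G, ∀ t : ℤ,
    Unmovable M Δ a → Unmovable M Δ b →
    ¬(a ∈ thetaBar M₁ θ ∧ b ∈ thetaBar M₁ θ) →
    Unmovable M Δ c → a * b = c * Δ ^ t →
    ∃ ε : ℕ, ε ≤ 1 ∧
      (dpt M M₁ N c : ℤ) =
        (dpt M M₁ N a : ℤ) + (dpt M M₁ N b : ℤ) - (ζ : ℤ) * t - (ε : ℤ) ∧
      ((a ∈ thetaSet M₁ θ ∨ b ∈ thetaSet M₁ θ ∨ c ∈ M₁) → ε = 1)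

/-- A Garside structure with group of fractions the subgroup `car`. -/
structure IsGarsideOn (car : Subgroup G) (M : Submonoid G) (Δ : G) : Prop where
  M_sub : (M : Set G) ⊆ (car : Set G)
  delta_mem : Δ ∈ M
  units_trivial : ∀ x : G, x ∈ M → x⁻¹ ∈ M → x = 1
  noetherian : ∀ a ∈ M, ∃ n : ℕ, 1 ≤ n ∧ ∀ l : List G,
      (∀ x ∈ l, x ∈ M ∧ x ≠ 1) → l.prod = a → l.length ≤ n
  balanced : Balanced M Δ
  div_finite : (DivR M Δ).Finite
  div_gen_monoid : Submonoid.closure (DivR M Δ) = M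
  div_gen_group : Subgroup.closure (DivR M Δ) = car
  meet : ∀ a ∈ car, ∀ b ∈ car, ∃ c ∈ car, leR M c a ∧ leR M c b ∧
      ∀ d ∈ car, leR M d a → leR M d b → leR M d c
  join : ∀ a ∈ car, ∀ b ∈ car, ∃ c ∈ car, leR M a c ∧ leR M b c ∧
      ∀ d ∈ car, leR M a d → leR M b d → leR M c d

/-- The parabolic submonoid determined by `δ`: the submonoid generated by `Div(δ)`. -/
def parM (M : Submonoid G) (δ : G) : Submonoid G := Submonoid.closure (DivR M δ)

/-- The parabolic subgroup determined by `δ`: the subgroup generated by `Div(δ)`. -/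
def parG (M : Submonoid G) (δ : G) : Subgroup G := Subgroup.closure (DivR M δ)

/-- `δ` determines a parabolic substructure of `(G, M, Δ)`. -/
structure IsParabolic (M : Submonoid G) (Δ δ : G) : Prop where
  mem : δ ∈ M
  balanced : Balanced M δ
  div_eq : DivR M δ = DivR M Δ ∩ (parM M δ : Set G)

/-- The setting of Section 3: a Garside structure `(car, M, Δ)` together with two
parabolic substructures `(H, N, Λ)` (given by `lam`) and `(G₁, M₁, Δ₁)` (given by `δ1`),
with `N ≠ M`, `M₁ ≠ M`, `N ∪ M₁` generating `M`, `Δ` central, `Δ₁` central in `G₁`. -/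
structure Setting (G : Type*) [Group G] where
  car : Subgroup G
  M : Submonoid G
  Δ : G
  δ1 : G
  lam : G
  garside : IsGarsideOn car M Δ
  par1 : IsParabolic M Δ δ1
  parH : IsParabolic M Δ lam
  N_ne : parM M lam ≠ M
  M1_ne : parM M δ1 ≠ M
  unionGen : Submonoid.closure ((parM M lam : Set G) ∪ (parM M δ1 : Set G)) = M
  delta_central : ∀ g ∈ car, Δ * g = g * Δ
  delta1_central : ∀ g ∈ parG M δ1, δ1 * g = g * δ1

namespace Setting

variable (S : Setting G)

/-- The parabolic submonoid `M₁`. -/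
def M₁ : Submonoid G := parM S.M S.δ1

/-- The parabolic submonoid `N`. -/
def Nsub : Submonoid G := parM S.M S.lam

/-- The parabolic subgroup `G₁`. -/
def G₁ : Subgroup G := parG S.M S.δ1

/-- `θ = Δ Δ₁⁻¹`. -/
def theta : G := S.Δ * S.δ1⁻¹

/-- The set of `(H, G₁)`-negative elements. -/
def Neg : Set G := {α : G | Negative S.M S.M₁ S.Nsub S.Δ α}

/-- The set of `(H, G₁)`-positive elements. -/
def Pos : Set G := {α : G | α⁻¹ ∈ S.Neg}

/-- Condition A. -/
def condA (ζ : ℕ) : Prop := CondA S.M S.M₁ S.Nsub S.Δ ζ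

/-- Condition B. -/
def condB (ζ : ℕ) : Prop := CondB S.M S.M₁ S.Nsub S.Δ S.theta ζ

/-- `(H, G₁)` is a Dehornoy structure: `PP ⊆ P`, `G₁ P G₁ ⊆ P`, and the group is the
disjoint union of `P`, `P⁻¹` and `G₁`. -/
def IsDehornoy : Prop :=
  (∀ α ∈ S.Pos, ∀ β ∈ S.Pos, α * β ∈ S.Pos) ∧
  (∀ g₁ ∈ S.G₁, ∀ α ∈ S.Pos, ∀ g₂ ∈ S.G₁, g₁ * α * g₂ ∈ S.Pos) ∧
  (∀ α ∈ S.car, α ∈ S.Pos ∨ α ∈ S.Neg ∨ α ∈ S.G₁) ∧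
  (∀ α : G, ¬(α ∈ S.Pos ∧ α ∈ S.Neg)) ∧
  (∀ α : G, ¬(α ∈ S.Pos ∧ α ∈ S.G₁)) ∧
  (∀ α : G, ¬(α ∈ S.Neg ∧ α ∈ S.G₁))

end Setting

end GarsideOrder

/-!
Write `α = a Δ^t` in `Δ`-form and let `b` be the unmovable element with `a b = Δ^m`, so that
`α⁻¹ = b Δ^(-(t + m))`. By Condition A, `α` is negative as soon as `-t ≥ 1` and `dpt a ≤ ζ (-t)`,
and positive as soon as `t + m ≥ 1` and `dpt b ≤ ζ (t + m)`. Condition B applied to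
`a b = 1 · Δ^m` gives `dpt a + dpt b = ζ m + 1`, and the same bound holds when `a` or `b` lies in
`M₁`, because right multiplication by `M₁` does not change the `M₁`-stripped element, hence the
depth. This budget leaves room only for `α ∈ M₁` or `α⁻¹ ∈ M₁`. If `a = θ^j a₀` and `b = θ^l b₀`
are both theta elements, then `dpt a = ζ j + 1`, `dpt b = ζ l + 1` and `m = j + l`, and `α` is
negative, positive or equal to `δ₁^(-j) a₀ ∈ G₁` according as `-t > j`, `-t < j` or `-t = j`.

Depth only makes sense once the alternating form exists: stripping tails terminates because,
from the second step on, each step removes a nontrivial tail and so lowers the maximal length of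
a factorisation, which is finite by Noetherianity.
-/

namespace GarsideOrder

theorem depth_budget_cases {ζ da db k n : ℤ} (hζ : 1 ≤ ζ) (hda : 0 ≤ da) (hdb : 0 ≤ db)
    (h : da + db ≤ ζ * (k + n) + 1) :
    (1 ≤ k ∧ da < ζ * k + 1) ∨ (1 ≤ n ∧ db < ζ * n + 1) ∨ (k = 0 ∧ da = 0) ∨
      (n = 0 ∧ db = 0) := by
  by_contra! hc
  obtain ⟨h1, h2, h3, h4⟩ := hc
  rcases lt_trichotomy k 0 with hk | rfl | hk <;> rcases lt_trichotomy n 0 with hn | rfl | hn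
  · nlinarith
  · nlinarith [(h4 rfl).symm.lt_of_le hdb]
  · nlinarith [h2 hn]
  · nlinarith [(h3 rfl).symm.lt_of_le hda]
  · nlinarith [(h3 rfl).symm.lt_of_le hda, (h4 rfl).symm.lt_of_le hdb]
  · nlinarith [(h3 rfl).symm.lt_of_le hda, h2 hn]
  · nlinarith [h1 hk]
  · nlinarith [(h4 rfl).symm.lt_of_le hdb, h1 hk]
  · nlinarith [h1 hk, h2 hn]

variable {G : Type*} [Group G]

section Divisibility

variable {M : Submonoid G} {a b c : G}

theorem leR_refl (M : Submonoid G) (a : G) : leR M a a := by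
  simp [leR, M.one_mem]

theorem leR_trans (h₁ : leR M a b) (h₂ : leR M b c) : leR M a c := by
  simpa [leR, mul_assoc] using M.mul_mem h₂ h₁

theorem leR_mul_left (hc : c ∈ M) (a : G) : leR M a (c * a) := by
  simpa [leR] using hc

theorem one_leR (ha : a ∈ M) : leR M 1 a := by
  simpa [leR] using ha

theorem mem_of_leR (ha : a ∈ M) (h : leR M a b) : b ∈ M := by
  simpa [leR] using M.mul_mem h ha

theorem leR_mul_right_iff (g : G) : leR M (a * g) (b * g) ↔ leR M a b := by
  simp [leR, mul_assoc]

theorem inv_mem_of_leR_one (h : leR M a 1) : a⁻¹ ∈ M := by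
  simpa [leR] using h

end Divisibility

namespace Setting

variable (S : Setting G) {a b c d j s t u x y : G} {m : ℕ}

theorem mem_car_of_mem_M (h : x ∈ S.M) : x ∈ S.car :=
  S.garside.M_sub h

theorem commute_delta (h : x ∈ S.car) : Commute S.Δ x :=
  S.delta_central x h

theorem eq_one_of_mem_of_inv_mem (h : x ∈ S.M) (h' : x⁻¹ ∈ S.M) : x = 1 :=
  S.garside.units_trivial x h h'

theorem leR_antisymm (h : leR S.M a b) (h' : leR S.M b a) : a = b := by
  have hab : b * a⁻¹ = 1 := S.eq_one_of_mem_of_inv_mem h (by simpa [leR] using h')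
  exact (mul_inv_eq_one.1 hab).symm

theorem parM_le_M (δ : G) : parM S.M δ ≤ S.M :=
  Submonoid.closure_le.2 fun _ hb => hb.1

theorem delta_ne_one : S.Δ ≠ 1 := by
  intro hΔ
  have hM : S.M = ⊥ := by
    rw [← S.garside.div_gen_monoid, eq_bot_iff, Submonoid.closure_le]
    intro x hx
    exact Submonoid.mem_bot.2
      (S.eq_one_of_mem_of_inv_mem hx.1 (inv_mem_of_leR_one (hΔ ▸ hx.2)))
  exact S.N_ne (le_antisymm (S.parM_le_M S.lam) (hM ▸ bot_le))

theorem unmovable_one : Unmovable S.M S.Δ 1 :=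
  ⟨S.M.one_mem, fun h => S.delta_ne_one
    (S.eq_one_of_mem_of_inv_mem S.garside.delta_mem (inv_mem_of_leR_one h))⟩

def IsJoin (x y j : G) : Prop :=
  leR S.M x j ∧ leR S.M y j ∧ ∀ d, leR S.M x d → leR S.M y d → leR S.M j d

theorem isJoin_one_left (hx : x ∈ S.M) : S.IsJoin 1 x x :=
  ⟨one_leR hx, leR_refl _ x, fun _ _ h => h⟩

variable {S}

theorem IsJoin.symm (h : S.IsJoin x y j) : S.IsJoin y x j :=
  ⟨h.2.1, h.1, fun d hx hy => h.2.2 d hy hx⟩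

theorem IsJoin.mul_right (h : S.IsJoin x y j) (g : G) : S.IsJoin (x * g) (y * g) (j * g) := by
  refine ⟨(leR_mul_right_iff g).2 h.1, (leR_mul_right_iff g).2 h.2.1, fun d hx hy => ?_⟩
  rw [← inv_mul_cancel_right d g] at hx hy ⊢
  rw [leR_mul_right_iff] at hx hy ⊢
  exact h.2.2 _ hx hy

theorem IsJoin.of_leR_of_isJoin (hsx : leR S.M s x) (hu : S.IsJoin s y u)
    (hj : S.IsJoin x u j) : S.IsJoin x y j :=
  ⟨hj.1, leR_trans hu.2.1 hj.2.1,
    fun d hx hy => hj.2.2 d hx (hu.2.2 d (leR_trans hsx hx) hy)⟩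

variable (S)

theorem exists_isJoin (hx : x ∈ S.M) (hy : y ∈ S.M) : ∃ j, S.IsJoin x y j := by
  obtain ⟨j, -, hxj, hyj, hj⟩ :=
    S.garside.join x (S.mem_car_of_mem_M hx) y (S.mem_car_of_mem_M hy)
  exact ⟨j, hxj, hyj, fun d hxd hyd => hj d (S.mem_car_of_mem_M (mem_of_leR hx hxd)) hxd hyd⟩

/-- `x` and `y` have a join `j` whose complements `j x⁻¹` and `j y⁻¹` lie in `N`. -/
def JoinsWithin (N : Submonoid G) (x y : G) : Prop :=
  ∃ j, S.IsJoin x y j ∧ leR N x j ∧ leR N y j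

def IsJoinClosed (N : Submonoid G) : Prop :=
  N ≤ S.M ∧ ∀ x ∈ N, ∀ y ∈ N, S.JoinsWithin N x y

variable {S} {N : Submonoid G}

theorem JoinsWithin.symm (h : S.JoinsWithin N x y) : S.JoinsWithin N y x :=
  let ⟨j, hj, hxj, hyj⟩ := h
  ⟨j, hj.symm, hyj, hxj⟩

/-- The join of `x s` and `y` is `r s`, where `u = s ∨ y` and `r = x ∨ u s⁻¹`. -/
theorem JoinsWithin.mul_right (hx : x ∈ S.M) (hu : S.IsJoin s y u)
    (hyu : leR N y u) (h : S.JoinsWithin N x (u * s⁻¹)) : S.JoinsWithin N (x * s) y := by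
  obtain ⟨r, hr, hxr, hur⟩ := h
  refine ⟨r * s, IsJoin.of_leR_of_isJoin (leR_mul_left hx s) hu
    (inv_mul_cancel_right u s ▸ hr.mul_right s), (leR_mul_right_iff s).2 hxr, ?_⟩
  have e : r * s * y⁻¹ = r * (u * s⁻¹)⁻¹ * (u * y⁻¹) := by group
  exact (show r * s * y⁻¹ ∈ N from e ▸ N.mul_mem hur hyu)

variable {δ : G}

theorem mul_inv_mem_DivR_of_isJoin (hδ : IsParabolic S.M S.Δ δ) (hs : s ∈ DivR S.M δ)
    (ht : t ∈ DivR S.M δ) (hj : S.IsJoin s t j) : j * s⁻¹ ∈ DivR S.M δ := by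
  have hjL : j ∈ DivL S.M δ := hδ.balanced ▸ ⟨mem_of_leR hs.1 hj.1, hj.2.2 δ hs.2 ht.2⟩
  rw [hδ.balanced]
  refine ⟨hj.1, ?_⟩
  have e : (j * s⁻¹)⁻¹ * δ = s * (j⁻¹ * δ) := by group
  exact (show (j * s⁻¹)⁻¹ * δ ∈ S.M from e ▸ S.M.mul_mem hs.1 hjL.2)

theorem joinsWithin_parM_of_mem_DivR (hδ : IsParabolic S.M S.Δ δ) (hy : y ∈ parM S.M δ) :
    ∀ s ∈ DivR S.M δ, S.JoinsWithin (parM S.M δ) y s := by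
  induction hy using Submonoid.closure_induction_right with
  | one =>
    intro s hs
    exact ⟨s, S.isJoin_one_left hs.1, one_leR (Submonoid.subset_closure hs),
      leR_refl _ s⟩
  | mul_right y hy t ht ih =>
    intro s hs
    obtain ⟨w, hw⟩ := S.exists_isJoin ht.1 hs.1
    exact JoinsWithin.mul_right (S.parM_le_M δ hy) hw
      (Submonoid.subset_closure (S.mul_inv_mem_DivR_of_isJoin hδ hs ht hw.symm))
      (ih _ (S.mul_inv_mem_DivR_of_isJoin hδ ht hs hw))

theorem isJoinClosed_parM (hδ : IsParabolic S.M S.Δ δ) : S.IsJoinClosed (parM S.M δ) := by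
  refine ⟨S.parM_le_M δ, fun x hx => ?_⟩
  induction hx using Submonoid.closure_induction_right with
  | one =>
    intro y hy
    exact ⟨y, S.isJoin_one_left (S.parM_le_M δ hy), one_leR hy, leR_refl _ y⟩
  | mul_right x hx s hs ih =>
    intro y hy
    obtain ⟨u, hu, hsu, hyu⟩ := (S.joinsWithin_parM_of_mem_DivR hδ hy s hs).symm
    exact JoinsWithin.mul_right (S.parM_le_M δ hx) hu hyu (ih _ hsu)

theorem isJoinClosed_M1 : S.IsJoinClosed S.M₁ := S.isJoinClosed_parM S.par1

variable (S)

def factorLengths (x : G) : Set ℕ :=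
  {k | ∃ l : List G, (∀ s ∈ l, s ∈ S.M ∧ s ≠ 1) ∧ l.prod = x ∧ l.length = k}

noncomputable def factorLength (x : G) : ℕ := sSup (S.factorLengths x)

theorem bddAbove_factorLengths (hx : x ∈ S.M) : BddAbove (S.factorLengths x) := by
  obtain ⟨n, -, hn⟩ := S.garside.noetherian x hx
  exact ⟨n, fun _ ⟨l, hl, hlx, hlk⟩ => hlk ▸ hn l hl hlx⟩

theorem exists_factorization (hx : x ∈ S.M) : ∃ l : List G,
    (∀ s ∈ l, s ∈ S.M ∧ s ≠ 1) ∧ l.prod = x ∧ l.length = S.factorLength x := by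
  refine Nat.sSup_mem ?_ (S.bddAbove_factorLengths hx)
  by_cases h : x = 1
  · exact ⟨0, [], by simp, by simp [h], rfl⟩
  · exact ⟨1, [x], by simp [hx, h], by simp, rfl⟩

theorem length_le_factorLength {l : List G} (hl : ∀ s ∈ l, s ∈ S.M ∧ s ≠ 1) :
    l.length ≤ S.factorLength l.prod :=
  le_csSup (S.bddAbove_factorLengths (Submonoid.list_prod_mem _ fun s hs => (hl s hs).1))
    ⟨l, hl, rfl, rfl⟩

theorem factorLength_lt_mul_left (hc : c ∈ S.M) (hd : d ∈ S.M) (hd1 : d ≠ 1) :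
    S.factorLength c < S.factorLength (d * c) := by
  obtain ⟨l, hl, rfl, hlen⟩ := S.exists_factorization hc
  have h := S.length_le_factorLength (l := d :: l)
    (by simpa [List.forall_mem_cons] using ⟨⟨hd, hd1⟩, hl⟩)
  simp only [List.length_cons, List.prod_cons] at h
  omega

theorem factorLength_lt_mul_right (hc : c ∈ S.M) (hd : d ∈ S.M) (hd1 : d ≠ 1) :
    S.factorLength c < S.factorLength (c * d) := by
  obtain ⟨l, hl, rfl, hlen⟩ := S.exists_factorization hc
  have h := S.length_le_factorLength (l := l ++ [d])
    (fun s hs => (List.mem_append.1 hs).elim (hl s) fun h => List.mem_singleton.1 h ▸ ⟨hd, hd1⟩)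
  simp only [List.length_append, List.length_singleton, List.prod_append,
    List.prod_singleton] at h
  omega

theorem factorLength_le_of_leR (hc : c ∈ S.M) (h : leR S.M c a) :
    S.factorLength c ≤ S.factorLength a := by
  rw [← inv_mul_cancel_right a c]
  by_cases h1 : a * c⁻¹ = 1
  · rw [h1, one_mul]
  · exact (S.factorLength_lt_mul_left hc h h1).le

def IsTail (N : Submonoid G) (a τ : G) : Prop :=
  τ ∈ N ∧ leR S.M τ a ∧ ∀ c ∈ N, leR S.M c a → leR S.M c τ

variable {S}

theorem IsTail.tail_eq (h : S.IsTail N a t) : tail S.M N a = t := by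
  have hset : {c | c ∈ N ∧ leR S.M c a} = {c | c ∈ N ∧ leR S.M c t} :=
    Set.ext fun c => ⟨fun hc => ⟨hc.1, h.2.2 c hc.1 hc.2⟩, fun hc => ⟨hc.1, leR_trans hc.2 h.2.1⟩⟩
  have hex : ∃ b, b ∈ N ∧ {c | c ∈ N ∧ leR S.M c a} = {c | c ∈ N ∧ leR S.M c b} :=
    ⟨t, h.1, hset⟩
  rw [tail, dif_pos hex]
  obtain ⟨hbN, hb⟩ := hex.choose_spec
  have hba : leR S.M hex.choose a := ((Set.ext_iff.1 hb _).2 ⟨hbN, leR_refl _ _⟩).2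
  have htb : leR S.M t hex.choose := ((Set.ext_iff.1 hb t).1 ⟨h.1, h.2.1⟩).2
  exact S.leR_antisymm (h.2.2 _ hbN hba) htb

theorem tail_eq_self (hx : x ∈ N) : tail S.M N x = x :=
  IsTail.tail_eq ⟨hx, leR_refl _ x, fun _ _ h => h⟩

theorem exists_isTail (hN : S.IsJoinClosed N) (ha : a ∈ S.M) : ∃ t, S.IsTail N a t := by
  set T := {c | c ∈ N ∧ leR S.M c a}
  have hfin : (S.factorLength '' T).Finite := (Set.finite_Iic (S.factorLength a)).subset
    (Set.image_subset_iff.2 fun c hc => S.factorLength_le_of_leR (hN.1 hc.1) hc.2)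
  obtain ⟨t, ⟨htN, hta⟩, hmax⟩ :=
    Set.Finite.exists_maximalFor' S.factorLength T hfin ⟨1, N.one_mem, one_leR ha⟩
  refine ⟨t, htN, hta, fun c hcN hca => ?_⟩
  obtain ⟨j, hj, htj, -⟩ := hN.2 t htN c hcN
  have hjN : j ∈ N := mem_of_leR htN htj
  have hja : leR S.M j a := hj.2.2 a hta hca
  suffices j = t from this ▸ hj.2.1
  by_contra hne
  have hlt := S.factorLength_lt_mul_left (hN.1 htN) hj.1 (mt mul_inv_eq_one.1 hne)
  rw [inv_mul_cancel_right] at hlt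
  exact absurd (hmax ⟨hjN, hja⟩ hlt.le) (not_le.2 hlt)

theorem isTail_tail (hN : S.IsJoinClosed N) (ha : a ∈ S.M) : S.IsTail N a (tail S.M N a) := by
  obtain ⟨t, ht⟩ := exists_isTail hN ha
  rwa [ht.tail_eq]

theorem IsTail.mul_right (hN : S.IsJoinClosed N) (h : S.IsTail N a t) (hx : x ∈ N) :
    S.IsTail N (a * x) (t * x) := by
  refine ⟨N.mul_mem h.1 hx, (leR_mul_right_iff x).2 h.2.1, fun c hc hcax => ?_⟩
  obtain ⟨j, hj, hcj, hxj⟩ := hN.2 c hc x hx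
  have hjax : leR S.M j (a * x) :=
    hj.2.2 _ hcax (leR_mul_left (mem_of_leR (hN.1 h.1) h.2.1) x)
  rw [← inv_mul_cancel_right j x, leR_mul_right_iff] at hjax
  have hjtx := (leR_mul_right_iff x).2 (h.2.2 _ hxj hjax)
  rw [inv_mul_cancel_right] at hjtx
  exact leR_trans hj.1 hjtx

theorem tail_mul_of_mem (hN : S.IsJoinClosed N) (ha : a ∈ S.M) (hx : x ∈ N) :
    tail S.M N (a * x) = tail S.M N a * x :=
  ((isTail_tail hN ha).mul_right hN hx).tail_eq

theorem eq_one_of_leR_mul_inv_tail (hN : S.IsJoinClosed N) (ha : a ∈ S.M) (hc : c ∈ N)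
    (h : leR S.M c (a * (tail S.M N a)⁻¹)) : c = 1 := by
  obtain ⟨htN, -, hmax⟩ := isTail_tail hN ha
  have hca : leR S.M (c * tail S.M N a) a := by
    simpa using (leR_mul_right_iff (tail S.M N a)).2 h
  have hc1 := hmax _ (N.mul_mem hc htN) hca
  rw [← one_mul (tail S.M N a), ← mul_assoc, mul_one, leR_mul_right_iff] at hc1
  exact S.eq_one_of_mem_of_inv_mem (hN.1 hc) (inv_mem_of_leR_one hc1)

variable (S)

/-- The parabolic submonoid whose tail is removed at step `i` of the alternating form. -/
def stripMonoid (i : ℕ) : Submonoid G := if i % 2 = 0 then S.M₁ else S.Nsub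

theorem isJoinClosed_stripMonoid (i : ℕ) : S.IsJoinClosed (S.stripMonoid i) := by
  unfold stripMonoid
  split
  exacts [S.isJoinClosed_M1, S.isJoinClosed_parM S.parH]

theorem mem_stripMonoid_or (i : ℕ) (h : t ∈ S.Nsub ∨ t ∈ S.M₁) :
    t ∈ S.stripMonoid i ∨ t ∈ S.stripMonoid (i + 1) := by
  rcases Nat.mod_two_eq_zero_or_one i with hi | hi
  · simp only [stripMonoid, hi, show (i + 1) % 2 = 1 by omega]
    tauto
  · simp only [stripMonoid, hi, show (i + 1) % 2 = 0 by omega]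
    tauto

theorem strip_succ (i : ℕ) (a : G) : strip S.M S.M₁ S.Nsub (i + 1) a =
    strip S.M S.M₁ S.Nsub i a * (tail S.M (S.stripMonoid i) (strip S.M S.M₁ S.Nsub i a))⁻¹ :=
  rfl

theorem strip_one (a : G) : strip S.M S.M₁ S.Nsub 1 a = a * (tail S.M S.M₁ a)⁻¹ := rfl

theorem strip_mem (ha : a ∈ S.M) (i : ℕ) : strip S.M S.M₁ S.Nsub i a ∈ S.M := by
  induction i with
  | zero => exact ha
  | succ i ih =>
    rw [strip_succ]
    exact (isTail_tail (S.isJoinClosed_stripMonoid i) ih).2.1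

theorem exists_ne_one_leR_of_ne_one (ha : a ∈ S.M) (hne : a ≠ 1) :
    ∃ t ≠ 1, (t ∈ S.Nsub ∨ t ∈ S.M₁) ∧ leR S.M t a := by
  rw [← S.unionGen] at ha
  induction ha using Submonoid.closure_induction_right with
  | one => exact absurd rfl hne
  | mul_right x hx t ht ih =>
    by_cases ht1 : t = 1
    · subst ht1
      rw [mul_one] at hne ⊢
      exact ih hne
    · exact ⟨t, ht1, ht, leR_mul_left (S.unionGen ▸ hx) t⟩

theorem factorLength_strip_lt (ha : a ∈ S.M) (i : ℕ)
    (hne : strip S.M S.M₁ S.Nsub (i + 1) a ≠ 1) :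
    S.factorLength (strip S.M S.M₁ S.Nsub (i + 2) a) <
      S.factorLength (strip S.M S.M₁ S.Nsub (i + 1) a) := by
  set b := strip S.M S.M₁ S.Nsub (i + 1) a
  have hb : b ∈ S.M := S.strip_mem ha (i + 1)
  obtain ⟨t, ht1, htN, htb⟩ := S.exists_ne_one_leR_of_ne_one hb hne
  have htP : t ∈ S.stripMonoid (i + 1) := (S.mem_stripMonoid_or i htN).resolve_left fun h =>
    ht1 (eq_one_of_leR_mul_inv_tail (S.isJoinClosed_stripMonoid i) (S.strip_mem ha i) h htb)
  obtain ⟨hτP, -, hτmax⟩ := isTail_tail (S.isJoinClosed_stripMonoid (i + 1)) hb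
  have hτ1 : tail S.M (S.stripMonoid (i + 1)) b ≠ 1 := fun h1 => ht1
    (S.eq_one_of_mem_of_inv_mem ((S.isJoinClosed_stripMonoid _).1 htP)
      (inv_mem_of_leR_one (h1 ▸ hτmax t htP htb)))
  have hlt := S.factorLength_lt_mul_right (S.strip_mem ha (i + 2))
    ((S.isJoinClosed_stripMonoid _).1 hτP) hτ1
  rwa [strip_succ, inv_mul_cancel_right] at hlt

theorem exists_strip_eq_one (ha : a ∈ S.M) : ∃ p, 1 ≤ p ∧ strip S.M S.M₁ S.Nsub p a = 1 := by
  by_contra! h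
  have hdecr : ∀ n, S.factorLength (strip S.M S.M₁ S.Nsub (n + 1) a) + n ≤
      S.factorLength (strip S.M S.M₁ S.Nsub 1 a) := by
    intro n
    induction n with
    | zero => simp
    | succ n ih =>
      have := S.factorLength_strip_lt ha n (h (n + 1) (by omega))
      rw [show n + 2 = n + 1 + 1 from rfl] at this
      omega
  have := hdecr (S.factorLength (strip S.M S.M₁ S.Nsub 1 a) + 1)
  omega

theorem mem_M1_of_dpt_eq_zero (ha : a ∈ S.M) (h : dpt S.M S.M₁ S.Nsub a = 0) : a ∈ S.M₁ := by
  have hbh : 1 ≤ bh S.M S.M₁ S.Nsub a ∧ strip S.M S.M₁ S.Nsub (bh S.M S.M₁ S.Nsub a) a = 1 :=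
    Nat.sInf_mem (S.exists_strip_eq_one ha)
  have hbh_eq : bh S.M S.M₁ S.Nsub a = 1 := by unfold dpt at h; omega
  rw [hbh_eq, strip_one, mul_inv_eq_one] at hbh
  exact hbh.2 ▸ (isTail_tail S.isJoinClosed_M1 ha).1

theorem dpt_eq_zero_of_mem_M1 (hx : x ∈ S.M₁) : dpt S.M S.M₁ S.Nsub x = 0 := by
  have hbh : bh S.M S.M₁ S.Nsub x ≤ 1 :=
    Nat.sInf_le ⟨le_rfl, by rw [strip_one, tail_eq_self hx, mul_inv_cancel]⟩
  unfold dpt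
  omega

theorem dpt_congr (h : strip S.M S.M₁ S.Nsub 1 a = strip S.M S.M₁ S.Nsub 1 b) :
    dpt S.M S.M₁ S.Nsub a = dpt S.M S.M₁ S.Nsub b := by
  have hstrip : ∀ p, strip S.M S.M₁ S.Nsub (p + 1) a = strip S.M S.M₁ S.Nsub (p + 1) b := by
    intro p
    induction p with
    | zero => exact h
    | succ p ih => rw [strip_succ, ih, ← strip_succ]
  have hset : {p | 1 ≤ p ∧ strip S.M S.M₁ S.Nsub p a = 1} =
      {p | 1 ≤ p ∧ strip S.M S.M₁ S.Nsub p b = 1} := by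
    ext p
    refine and_congr_right fun hp => ?_
    obtain ⟨q, rfl⟩ := Nat.exists_eq_add_of_le' hp
    rw [hstrip]
  simp only [dpt, bh, hset]

theorem dpt_mul_of_mem_M1 (ha : a ∈ S.M) (hx : x ∈ S.M₁) :
    dpt S.M S.M₁ S.Nsub (a * x) = dpt S.M S.M₁ S.Nsub a := by
  apply dpt_congr
  rw [strip_one, strip_one, tail_mul_of_mem S.isJoinClosed_M1 ha hx]
  group

theorem zpow_delta_mul_comm (hx : x ∈ S.car) (t : ℤ) : S.Δ ^ t * x = x * S.Δ ^ t :=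
  ((S.commute_delta hx).zpow_left t).eq

theorem exists_pow_mul_inv_mem (ha : a ∈ S.M) : ∃ r : ℕ, S.Δ ^ r * a⁻¹ ∈ S.M := by
  rw [← S.garside.div_gen_monoid] at ha
  induction ha using Submonoid.closure_induction with
  | mem s hs => exact ⟨1, by simpa [leR] using hs.2⟩
  | one => exact ⟨0, by simp⟩
  | mul x y _ _ hx hy =>
    obtain ⟨r, hr⟩ := hx
    obtain ⟨r', hr'⟩ := hy
    refine ⟨r + r', ?_⟩
    have e : S.Δ ^ (r + r') * (x * y)⁻¹ = S.Δ ^ r' * y⁻¹ * (S.Δ ^ r * x⁻¹) := by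
      rw [pow_add, mul_inv_rev, ← mul_assoc, mul_assoc (S.Δ ^ r),
        ((S.commute_delta (S.mem_car_of_mem_M hr')).pow_left r).eq, mul_assoc]
    exact e ▸ S.M.mul_mem hr' hr

theorem exists_unmovable_mul_pow (hx : x ∈ S.M) :
    ∃ a, ∃ e : ℕ, Unmovable S.M S.Δ a ∧ x = a * S.Δ ^ e := by
  induction hn : S.factorLength x using Nat.strong_induction_on generalizing x with
  | _ n ih =>
    by_cases h : leR S.M S.Δ x
    · have hlt := S.factorLength_lt_mul_right h S.garside.delta_mem S.delta_ne_one
      rw [inv_mul_cancel_right] at hlt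
      obtain ⟨a, e, ha, hxe⟩ := ih _ (hn ▸ hlt) h rfl
      exact ⟨a, e + 1, ha, by rw [pow_succ, ← mul_assoc, ← hxe, inv_mul_cancel_right]⟩
    · exact ⟨x, 0, ⟨hx, h⟩, by simp⟩

theorem exists_deltaForm {α : G} (hα : α ∈ S.car) :
    ∃ a, ∃ t : ℤ, Unmovable S.M S.Δ a ∧ α = a * S.Δ ^ t := by
  have hM : ∃ x ∈ S.M, ∃ t : ℤ, α = x * S.Δ ^ t := by
    rw [← S.garside.div_gen_group] at hα
    induction hα using Subgroup.closure_induction with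
    | mem s hs => exact ⟨s, hs.1, 0, by simp⟩
    | one => exact ⟨1, S.M.one_mem, 0, by simp⟩
    | mul _ _ _ _ hx hy =>
      obtain ⟨x, hx, t, rfl⟩ := hx
      obtain ⟨y, hy, t', rfl⟩ := hy
      refine ⟨x * y, S.M.mul_mem hx hy, t + t', ?_⟩
      rw [zpow_add, mul_assoc x, ← mul_assoc _ y, S.zpow_delta_mul_comm (S.mem_car_of_mem_M hy)]
      group
    | inv _ _ hx =>
      obtain ⟨x, hx, t, rfl⟩ := hx
      obtain ⟨r, hr⟩ := S.exists_pow_mul_inv_mem hx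
      refine ⟨S.Δ ^ r * x⁻¹, hr, -t - r, ?_⟩
      rw [← S.zpow_delta_mul_comm (S.mem_car_of_mem_M hr)]
      group
  obtain ⟨x, hx, t, rfl⟩ := hM
  obtain ⟨a, e, ha, rfl⟩ := S.exists_unmovable_mul_pow hx
  exact ⟨a, e + t, ha, by rw [mul_assoc, ← zpow_natCast, ← zpow_add]⟩

theorem exists_unmovable_mul_eq_pow (ha : a ∈ S.M) :
    ∃ b, ∃ m : ℕ, Unmovable S.M S.Δ b ∧ a * b = S.Δ ^ m := by
  classical
  have hex := S.exists_pow_mul_inv_mem ha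
  obtain ⟨m, hm, hmin⟩ : ∃ m : ℕ, S.Δ ^ m * a⁻¹ ∈ S.M ∧ ∀ k < m, S.Δ ^ k * a⁻¹ ∉ S.M :=
    ⟨Nat.find hex, Nat.find_spec hex, fun _ => Nat.find_min hex⟩
  have hcomm : Commute (S.Δ ^ m) a := (S.commute_delta (S.mem_car_of_mem_M ha)).pow_left m
  refine ⟨S.Δ ^ m * a⁻¹, m, ⟨hm, fun hΔ => ?_⟩,
    by rw [← mul_assoc, ← hcomm.eq, mul_inv_cancel_right]⟩
  cases m with
  | zero =>
    have ha1 : a = 1 := S.eq_one_of_mem_of_inv_mem ha (by simpa using hm)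
    exact S.unmovable_one.2 (by simpa [ha1] using hΔ)
  | succ k =>
    refine hmin k k.lt_succ_self ?_
    have e : S.Δ ^ (k + 1) * a⁻¹ * S.Δ⁻¹ = S.Δ ^ k * a⁻¹ := by
      rw [pow_succ, mul_assoc _ S.Δ, (S.commute_delta (S.mem_car_of_mem_M ha)).inv_right.eq]
      group
    exact e ▸ hΔ

theorem delta1_mem_M1 : S.δ1 ∈ S.M₁ :=
  Submonoid.subset_closure ⟨S.par1.mem, leR_refl _ _⟩

theorem theta_mem : S.theta ∈ S.M := by
  have h : S.δ1 ∈ DivR S.M S.δ1 := ⟨S.par1.mem, leR_refl _ _⟩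
  rw [S.par1.div_eq] at h
  exact h.1.2

theorem mem_G1_of_mem_M1 (hx : x ∈ S.M₁) : x ∈ S.G₁ :=
  (Submonoid.closure_le (S := S.G₁.toSubmonoid).2 Subgroup.subset_closure) hx

theorem mem_car_of_mem_G1 (hx : x ∈ S.G₁) : x ∈ S.car :=
  (Subgroup.closure_le _).2 (fun _ hs => S.mem_car_of_mem_M hs.1) hx

theorem commute_theta (hx : x ∈ S.G₁) : Commute S.theta x :=
  (S.commute_delta (S.mem_car_of_mem_G1 hx)).mul_left
    (show Commute S.δ1 x from S.delta1_central x hx).inv_left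

theorem theta_pow_mul_delta1_pow (k : ℕ) : S.theta ^ k * S.δ1 ^ k = S.Δ ^ k := by
  have hc : Commute S.Δ S.δ1⁻¹ := S.commute_delta
    (S.mem_car_of_mem_G1 (S.G₁.inv_mem (S.mem_G1_of_mem_M1 S.delta1_mem_M1)))
  rw [theta, hc.mul_pow, inv_pow, inv_mul_cancel_right]

variable {ζ : ℕ}

theorem dpt_delta_pow_le (hA : S.condA ζ) (m : ℕ) :
    dpt S.M S.M₁ S.Nsub (S.Δ ^ m) ≤ ζ * m + 1 := by
  rcases Nat.eq_zero_or_pos m with rfl | hm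
  · simp [S.dpt_eq_zero_of_mem_M1 S.M₁.one_mem]
  · exact (hA m hm).le

theorem dpt_theta_pow_mul (hA : S.condA ζ) {k : ℕ} (hk : 1 ≤ k) (ha : a ∈ S.M₁) :
    dpt S.M S.M₁ S.Nsub (S.theta ^ k * a) = ζ * k + 1 := by
  have hθ : S.theta ^ k ∈ S.M := S.M.pow_mem S.theta_mem k
  rw [S.dpt_mul_of_mem_M1 hθ ha, ← S.dpt_mul_of_mem_M1 hθ (S.M₁.pow_mem S.delta1_mem_M1 k),
    theta_pow_mul_delta1_pow, hA k hk]

theorem eq_of_theta_pow_mul_eq_delta_pow (hζ : 1 ≤ ζ) (hA : S.condA ζ) {k m : ℕ} (hk : 1 ≤ k)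
    (hc : c ∈ S.M₁) (h : S.theta ^ k * c = S.Δ ^ m) : m = k := by
  have hdpt := S.dpt_theta_pow_mul hA hk hc
  rw [h] at hdpt
  rcases Nat.eq_zero_or_pos m with rfl | hm
  · simp [S.dpt_eq_zero_of_mem_M1 S.M₁.one_mem] at hdpt
  · rw [hA m hm] at hdpt
    exact Nat.eq_of_mul_eq_mul_left hζ (by omega)

theorem mul_eq_delta_pow_comm (ha : a ∈ S.car) (h : a * b = S.Δ ^ m) : b * a = S.Δ ^ m := by
  rw [eq_inv_mul_of_mul_eq h, mul_assoc, ((S.commute_delta ha).pow_left m).eq,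
    inv_mul_cancel_left]

theorem dpt_add_dpt_le (hA : S.condA ζ) (hB : S.condB ζ) (ha : Unmovable S.M S.Δ a)
    (hb : Unmovable S.M S.Δ b) (hab : a * b = S.Δ ^ m)
    (hΘ : ¬(a ∈ thetaSet S.M₁ S.theta ∧ b ∈ thetaSet S.M₁ S.theta)) :
    dpt S.M S.M₁ S.Nsub a + dpt S.M S.M₁ S.Nsub b ≤ ζ * m + 1 := by
  by_cases hΘ' : a ∈ thetaBar S.M₁ S.theta ∧ b ∈ thetaBar S.M₁ S.theta
  · simp only [thetaBar, Set.mem_union, SetLike.mem_coe] at hΘ'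
    have hba := S.mul_eq_delta_pow_comm (S.mem_car_of_mem_M ha.1) hab
    rcases (by tauto : a ∈ S.M₁ ∨ b ∈ S.M₁) with h | h
    · rw [S.dpt_eq_zero_of_mem_M1 h, ← S.dpt_mul_of_mem_M1 hb.1 h, hba]
      simpa using S.dpt_delta_pow_le hA m
    · rw [S.dpt_eq_zero_of_mem_M1 h, ← S.dpt_mul_of_mem_M1 ha.1 h, hab]
      simpa using S.dpt_delta_pow_le hA m
  · obtain ⟨ε, -, hε, hε1⟩ := hB a b 1 m ha hb hΘ' S.unmovable_one
      (by rw [hab, one_mul, zpow_natCast])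
    rw [hε1 (Or.inr (Or.inr S.M₁.one_mem)), S.dpt_eq_zero_of_mem_M1 S.M₁.one_mem] at hε
    push_cast at hε
    zify
    linarith

theorem mem_Neg_of_dpt_lt (hA : S.condA ζ) (ha : Unmovable S.M S.Δ a) {k : ℤ} (hk : 1 ≤ k)
    (h : (dpt S.M S.M₁ S.Nsub a : ℤ) < ζ * k + 1) : a * S.Δ ^ (-k) ∈ S.Neg := by
  lift k to ℕ using (by omega)
  refine ⟨a, k, ha, by exact_mod_cast hk, by rw [zpow_neg, zpow_natCast], ?_⟩
  rw [hA k (by exact_mod_cast hk)]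
  exact_mod_cast h

theorem mem_Pos_of_dpt_lt (hA : S.condA ζ) (hb : Unmovable S.M S.Δ b) (hab : a * b = S.Δ ^ m)
    {k : ℤ} (hk : 1 ≤ (m : ℤ) - k) (h : (dpt S.M S.M₁ S.Nsub b : ℤ) < ζ * ((m : ℤ) - k) + 1) :
    a * S.Δ ^ (-k) ∈ S.Pos := by
  have hinv : (a * S.Δ ^ (-k))⁻¹ = b * S.Δ ^ (-((m : ℤ) - k)) := by
    calc (a * S.Δ ^ (-k))⁻¹ = S.Δ ^ k * (b * (a * b)⁻¹) := by group
      _ = b * S.Δ ^ (-((m : ℤ) - k)) := by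
        rw [← mul_assoc, S.zpow_delta_mul_comm (S.mem_car_of_mem_M hb.1), hab]
        group
  show _ ∈ S.Neg
  rw [hinv]
  exact S.mem_Neg_of_dpt_lt hA hb hk h

theorem trichotomy_of_mem_thetaSet (hζ : 1 ≤ ζ) (hA : S.condA ζ) (ha : Unmovable S.M S.Δ a)
    (hb : Unmovable S.M S.Δ b) (haΘ : a ∈ thetaSet S.M₁ S.theta)
    (hbΘ : b ∈ thetaSet S.M₁ S.theta) (hab : a * b = S.Δ ^ m) (k : ℤ) :
    a * S.Δ ^ (-k) ∈ S.Pos ∨ a * S.Δ ^ (-k) ∈ S.Neg ∨ a * S.Δ ^ (-k) ∈ S.G₁ := by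
  obtain ⟨j, hj, a₀, ha₀, rfl⟩ := haΘ
  obtain ⟨l, hl, b₀, hb₀, rfl⟩ := hbΘ
  have hm : m = j + l := by
    refine S.eq_of_theta_pow_mul_eq_delta_pow hζ hA (by omega) (S.M₁.mul_mem ha₀ hb₀) ?_
    rw [← hab, pow_add, mul_assoc, ← mul_assoc (S.theta ^ l),
      ((S.commute_theta (S.mem_G1_of_mem_M1 ha₀)).pow_left l).eq]
    group
  have hdpta := S.dpt_theta_pow_mul hA hj ha₀
  have hdptb := S.dpt_theta_pow_mul hA hl hb₀
  subst hm
  rcases lt_trichotomy k j with hkj | rfl | hkj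
  · refine Or.inl (S.mem_Pos_of_dpt_lt hA hb hab ?_ ?_)
    · push_cast
      omega
    rw [hdptb]
    push_cast
    nlinarith
  · refine Or.inr (Or.inr ?_)
    have hx : (S.δ1 ^ j)⁻¹ * a₀ ∈ S.G₁ := S.G₁.mul_mem
      (S.G₁.inv_mem (S.G₁.pow_mem (S.mem_G1_of_mem_M1 S.delta1_mem_M1) j))
      (S.mem_G1_of_mem_M1 ha₀)
    have e : S.theta ^ j * a₀ * S.Δ ^ (-(j : ℤ)) = (S.δ1 ^ j)⁻¹ * a₀ := by
      rw [eq_mul_inv_of_mul_eq (S.theta_pow_mul_delta1_pow j), mul_assoc (S.Δ ^ j), mul_assoc,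
        ← S.zpow_delta_mul_comm (S.mem_car_of_mem_G1 hx)]
      group
    exact e ▸ hx
  · refine Or.inr (Or.inl (S.mem_Neg_of_dpt_lt hA ha (by omega) ?_))
    rw [hdpta]
    push_cast
    nlinarith

theorem trichotomy_of_dpt_add_dpt_le (hζ : 1 ≤ ζ) (hA : S.condA ζ) (ha : Unmovable S.M S.Δ a)
    (hb : Unmovable S.M S.Δ b) (hab : a * b = S.Δ ^ m)
    (hdpt : dpt S.M S.M₁ S.Nsub a + dpt S.M S.M₁ S.Nsub b ≤ ζ * m + 1) (k : ℤ) :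
    a * S.Δ ^ (-k) ∈ S.Pos ∨ a * S.Δ ^ (-k) ∈ S.Neg ∨ a * S.Δ ^ (-k) ∈ S.G₁ := by
  rcases depth_budget_cases (ζ := ζ) (k := k) (n := m - k) (by exact_mod_cast hζ)
      (Nat.cast_nonneg (dpt S.M S.M₁ S.Nsub a)) (Nat.cast_nonneg (dpt S.M S.M₁ S.Nsub b))
      (by rw [add_sub_cancel]; exact_mod_cast hdpt)
    with ⟨hk, h⟩ | ⟨hk, h⟩ | ⟨rfl, h⟩ | ⟨hk, h⟩
  · exact Or.inr (Or.inl (S.mem_Neg_of_dpt_lt hA ha hk h))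
  · exact Or.inl (S.mem_Pos_of_dpt_lt hA hb hab hk h)
  · refine Or.inr (Or.inr ?_)
    rw [neg_zero, zpow_zero, mul_one]
    exact S.mem_G1_of_mem_M1 (S.mem_M1_of_dpt_eq_zero ha.1 (by exact_mod_cast h))
  · refine Or.inr (Or.inr ?_)
    rw [show -k = -(m : ℤ) by omega, zpow_neg, zpow_natCast,
      ← S.mul_eq_delta_pow_comm (S.mem_car_of_mem_M ha.1) hab, mul_inv_rev, mul_inv_cancel_left]
    exact S.G₁.inv_mem (S.mem_G1_of_mem_M1 (S.mem_M1_of_dpt_eq_zero hb.1 (by exact_mod_cast h)))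

end Setting

end GarsideOrder

open GarsideOrder in
/-- Assuming Conditions A and B with constant `ζ ≥ 1`, every element of `G` is
`(H, G₁)`-positive, or `(H, G₁)`-negative, or belongs to `G₁`. -/
theorem statement8 {G : Type*} [Group G] (S : Setting G) (hcar : S.car = ⊤)
    (ζ : ℕ) (hζ : 1 ≤ ζ) (hA : S.condA ζ) (hB : S.condB ζ) :
    ∀ α : G, α ∈ S.Pos ∨ α ∈ S.Neg ∨ α ∈ S.G₁ := by
  intro α
  obtain ⟨a, t, ha, rfl⟩ := S.exists_deltaForm (hcar ▸ Subgroup.mem_top α)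
  obtain ⟨b, m, hb, hab⟩ := S.exists_unmovable_mul_eq_pow ha.1
  rw [← neg_neg t]
  by_cases hΘ : a ∈ thetaSet S.M₁ S.theta ∧ b ∈ thetaSet S.M₁ S.theta
  · exact S.trichotomy_of_mem_thetaSet hζ hA ha hb hΘ.1 hΘ.2 hab (-t)
  · exact S.trichotomy_of_dpt_add_dpt_le hζ hA ha hb hab
      (S.dpt_add_dpt_le hA hB ha hb hab hΘ) (-t)
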